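/- Let ρ be a bipartite quasi-state on ℂ^{d_A}⊗ℂ^{d_B} and σ a bipartite quasi-state on ℂ^{d_{A'}}⊗ℂ^{d_{B'}}. Then there exists a PPTq operation N with N(ρ) = σ if and only if E_N(ρ) ≥ E_N(σ), where E_N denotes the logarithmic negativity. -/

import Mathlib

open scoped BigOperators ComplexOrder

noncomputable section

/-- Bipartite matrices on `ℂ^{IA} ⊗ ℂ^{IB}`, indexed by pairs. -/
abbrev BMat (IA IB : Type) : Type := Matrix (IA × IB) (IA × IB) ℂ

/-- Partial transpose on the `B` system: `(X^{T_B})_{(i,j),(k,l)} = X_{(i,l),(k,j)}`. -/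
def ptB {IA IB : Type} (X : BMat IA IB) : BMat IA IB :=
  fun p q => X (p.1, q.2) (q.1, p.2)

/-- Trace norm `‖X‖₁ = tr √(X† X)`. -/
noncomputable def traceNorm {n : Type} [Fintype n] [DecidableEq n]
    (X : Matrix n n ℂ) : ℝ :=
  (((Matrix.posSemidef_conjTranspose_mul_self X).1.eigenvectorUnitary : Matrix n n ℂ) *
      Matrix.diagonal (fun i => (((Matrix.posSemidef_conjTranspose_mul_self X).1.eigenvalues i).sqrt : ℂ)) *
      (star (Matrix.posSemidef_conjTranspose_mul_self X).1.eigenvectorUnitary : Matrix n n ℂ)).trace.re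

/-- Operator norm (largest singular value). -/
noncomputable def opNorm {n : Type} [Fintype n] [DecidableEq n] (X : Matrix n n ℂ) : ℝ :=
  ‖Matrix.toEuclideanCLM (𝕜 := ℂ) X‖

/-- Logarithmic negativity `E_N(X) = log₂ ‖X^{T_B}‖₁`. -/
noncomputable def EN {IA IB : Type} [Fintype IA] [Fintype IB] [DecidableEq IA] [DecidableEq IB]
    (X : BMat IA IB) : ℝ :=
  Real.logb 2 (traceNorm (ptB X))

/-- The extension `id_k ⊗ f` of a map on matrices, acting blockwise. -/
def extMap {I J : Type} (f : Matrix I I ℂ → Matrix J J ℂ) (k : ℕ)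
    (M : Matrix (Fin k × I) (Fin k × I) ℂ) : Matrix (Fin k × J) (Fin k × J) ℂ :=
  fun p q => f (fun i i' => M (p.1, i) (q.1, i')) p.2 q.2

/-- A map on matrices is completely positive if all its extensions `id_k ⊗ f`
map positive semidefinite matrices to positive semidefinite matrices. -/
def CompletelyPositive {I J : Type} [Fintype I] [Fintype J]
    (f : Matrix I I ℂ → Matrix J J ℂ) : Prop :=
  ∀ (k : ℕ) (M : Matrix (Fin k × I) (Fin k × I) ℂ), M.PosSemidef → (extMap f k M).PosSemidef

/-- A PPTq operation: a Hermitian-preserving, trace-preserving linear map `N`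
such that `T_{B'} ∘ N ∘ T_B` is completely positive. -/
def IsPPTq {IA IB JA JB : Type} [Fintype IA] [Fintype IB] [Fintype JA] [Fintype JB]
    (N : BMat IA IB →ₗ[ℂ] BMat JA JB) : Prop :=
  (∀ X : BMat IA IB, X.IsHermitian → (N X).IsHermitian) ∧
  (∀ X : BMat IA IB, (N X).trace = X.trace) ∧
  CompletelyPositive (fun X => ptB (N (ptB X)))

/-- A bipartite quasi-state: Hermitian with trace one. -/
def IsQuasiState {IA IB : Type} [Fintype IA] [Fintype IB] (ρ : BMat IA IB) : Prop :=
  ρ.IsHermitian ∧ ρ.trace = 1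

/-- A bipartite quantum state: positive semidefinite with trace one. -/
def IsState {IA IB : Type} [Fintype IA] [Fintype IB] (ρ : BMat IA IB) : Prop :=
  ρ.PosSemidef ∧ ρ.trace = 1

/-- The maximally entangled state `Φ^d = (1/d) ∑_{i,j} |ii⟩⟨jj|`. -/
noncomputable def MES (d : ℕ) : BMat (Fin d) (Fin d) :=
  fun p q => if p.1 = p.2 ∧ q.1 = q.2 then (1 : ℂ) / d else 0

/-- `n`-fold tensor (Kronecker) power, with all `A` factors grouped against all `B` factors. -/
def tensorPow {IA IB : Type} (ρ : BMat IA IB) (n : ℕ) :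
    BMat (Fin n → IA) (Fin n → IB) :=
  fun p q => ∏ i : Fin n, ρ (p.1 i, p.2 i) (q.1 i, q.2 i)

/-- Tensor (Kronecker) product of two bipartite matrices, grouping `A` systems together
and `B` systems together. -/
def tensorMul {IA IB JA JB : Type} (ρ : BMat IA IB) (σ : BMat JA JB) :
    BMat (IA × JA) (IB × JB) :=
  fun p q => ρ (p.1.1, p.2.1) (q.1.1, q.2.1) * σ (p.1.2, p.2.2) (q.1.2, q.2.2)

/-- One-shot exact distillable entanglement under PPTq operations. -/
noncomputable def oneShotDistill {IA IB : Type} [Fintype IA] [Fintype IB]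
    (ρ : BMat IA IB) : ℝ :=
  sSup { x : ℝ | ∃ d : ℕ, 0 < d ∧ x = Real.logb 2 d ∧
    ∃ Λ : BMat IA IB →ₗ[ℂ] BMat (Fin d) (Fin d), IsPPTq Λ ∧ Λ ρ = MES d }

/-- One-shot exact entanglement cost under PPTq operations. -/
noncomputable def oneShotCost {IA IB : Type} [Fintype IA] [Fintype IB]
    (ρ : BMat IA IB) : ℝ :=
  sInf { x : ℝ | ∃ d : ℕ, 0 < d ∧ x = Real.logb 2 d ∧
    ∃ Λ : BMat (Fin d) (Fin d) →ₗ[ℂ] BMat IA IB, IsPPTq Λ ∧ Λ (MES d) = ρ }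

/-- The one-shot distillation error for `n` copies towards `Φ^d`, optimized over PPTq operations. -/
noncomputable def distillErr {IA IB : Type} [Fintype IA] [Fintype IB]
    [DecidableEq IA] [DecidableEq IB] (ρ : BMat IA IB) (n d : ℕ) : ℝ :=
  sInf { e : ℝ | ∃ Λ : BMat (Fin n → IA) (Fin n → IB) →ₗ[ℂ] BMat (Fin d) (Fin d),
    IsPPTq Λ ∧ e = traceNorm (Λ (tensorPow ρ n) - MES d) }

/-- The one-shot dilution error for preparing `n` copies from `Φ^d`, optimized over PPTq operations. -/
noncomputable def costErr {IA IB : Type} [Fintype IA] [Fintype IB]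
    [DecidableEq IA] [DecidableEq IB] (ρ : BMat IA IB) (n d : ℕ) : ℝ :=
  sInf { e : ℝ | ∃ Λ : BMat (Fin d) (Fin d) →ₗ[ℂ] BMat (Fin n → IA) (Fin n → IB),
    IsPPTq Λ ∧ e = traceNorm (tensorPow ρ n - Λ (MES d)) }

/-- Distillable entanglement under PPTq operations (asymptotically vanishing error). -/
noncomputable def EDppt {IA IB : Type} [Fintype IA] [Fintype IB]
    [DecidableEq IA] [DecidableEq IB] (ρ : BMat IA IB) : ℝ :=
  sSup { r : ℝ | Filter.Tendsto (fun n : ℕ => distillErr ρ n (2 ^ ⌊r * n⌋₊))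
    Filter.atTop (nhds 0) }

/-- Entanglement cost under PPTq operations (asymptotically vanishing error). -/
noncomputable def ECppt {IA IB : Type} [Fintype IA] [Fintype IB]
    [DecidableEq IA] [DecidableEq IB] (ρ : BMat IA IB) : ℝ :=
  sInf { r : ℝ | Filter.Tendsto (fun n : ℕ => costErr ρ n (2 ^ ⌈r * n⌉₊))
    Filter.atTop (nhds 0) }

/-- Tempered negativity `N_τ(σ | ρ)`. -/
noncomputable def temperedNeg {IA IB : Type} [Fintype IA] [Fintype IB]
    [DecidableEq IA] [DecidableEq IB] (σ ρ : BMat IA IB) : ℝ :=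
  sSup { t : ℝ | ∃ X : Matrix (IA × IB) (IA × IB) ℂ, X.IsHermitian ∧
    opNorm (ptB X) ≤ 1 ∧ (X * ρ).trace = (opNorm X : ℂ) ∧ (X * σ).trace = (t : ℂ) }

/-- Asymptotic exact conversion rate under PPTq operations. -/
noncomputable def convRate {IA IB JA JB : Type} [Fintype IA] [Fintype IB]
    [Fintype JA] [Fintype JB]
    (ρ : BMat IA IB) (σ : BMat JA JB) : ℝ :=
  sSup { r : ℝ | 0 ≤ r ∧ ∀ᶠ n : ℕ in Filter.atTop,
    ∃ Λ : BMat (Fin n → IA) (Fin n → IB) →ₗ[ℂ]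
          BMat (Fin ⌊r * n⌋₊ → JA) (Fin ⌊r * n⌋₊ → JB),
      IsPPTq Λ ∧ Λ (tensorPow ρ n) = tensorPow σ ⌊r * n⌋₊ }

/-!
For Hermitian `A` of unit trace, `‖A‖₁ = tr A⁺ + tr A⁻` and `tr A⁺ - tr A⁻ = 1`.

If `N` is PPTq, then `M = T_{B'} ∘ N ∘ T_B` is positive and trace preserving, so with `A = ρ^Γ`
the matrix `σ^Γ = M A⁺ - M A⁻` is a difference of positive matrices of traces `tr A⁺` and `tr A⁻`.
Pairing with the spectral projection of `σ^Γ` onto `[0, ∞)` gives `‖σ^Γ‖₁ ≤ ‖ρ^Γ‖₁`.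

Conversely, if `‖σ^Γ‖₁ ≤ t = ‖ρ^Γ‖₁`, then `σ^Γ = (1 + t)/2 • ω₁ - (t - 1)/2 • ω₂` for states
`ω₁`, `ω₂`, and the measure-and-prepare channel `X ↦ tr (E X) • ω₁ + tr ((1 - E) X) • ω₂`, where `E`
is the spectral projection of `ρ^Γ` onto `[0, ∞)`, sends `ρ^Γ` to `σ^Γ`. Conjugated by partial
transposes, it is the required PPTq operation.
-/

open Matrix
open scoped MatrixOrder Kronecker

namespace Matrix

variable {n : Type*} [Fintype n] [DecidableEq n]

lemma trace_mul_nonneg {P Q : Matrix n n ℂ} (hP : 0 ≤ P) (hQ : 0 ≤ Q) : 0 ≤ (P * Q).trace := by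
  obtain ⟨D, rfl⟩ := CStarAlgebra.nonneg_iff_eq_star_mul_self.mp hP
  rw [star_eq_conjTranspose, Matrix.mul_assoc, trace_mul_comm]
  exact ((nonneg_iff_posSemidef.mp hQ).mul_mul_conjTranspose_same D).trace_nonneg

lemma re_trace_mul_sub_le {E P Q : Matrix n n ℂ} (hE₀ : 0 ≤ E) (hE₁ : E ≤ 1) (hP : 0 ≤ P)
    (hQ : 0 ≤ Q) : (E * (P - Q)).trace.re ≤ P.trace.re := by
  have hEQ := (Complex.le_def.mp (trace_mul_nonneg hE₀ hQ)).1
  have hEP := (Complex.le_def.mp (trace_mul_nonneg (sub_nonneg.mpr hE₁) hP)).1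
  simp only [Matrix.mul_sub, Matrix.sub_mul, Matrix.one_mul, trace_sub, Complex.sub_re,
    Complex.zero_re] at hEQ hEP ⊢
  linarith

lemma IsHermitian.exists_mul_eq_posPart {A : Matrix n n ℂ} (hA : A.IsHermitian) :
    ∃ E : Matrix n n ℂ, 0 ≤ E ∧ E ≤ 1 ∧ E * A = A⁺ ∧ (1 - E) * A = -A⁻ := by
  have hA' : IsSelfAdjoint A := hA
  let f : ℝ → ℝ := fun x => if 0 ≤ x then 1 else 0
  have hfA : cfc f A * A = A⁺ := by
    conv_lhs => enter [2]; rw [← cfc_id' ℝ A]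
    rw [← cfc_mul _ _ A (A.finite_real_spectrum.continuousOn _), CFC.posPart_def, cfcₙ_eq_cfc]
    refine cfc_congr fun x _ => ?_
    dsimp only [f]
    split_ifs with hx
    · simp [hx]
    · simp [(not_le.mp hx).le]
  refine ⟨cfc f A, cfc_nonneg fun x _ => by positivity, cfc_le_one _ _ fun x _ => ?_, hfA, ?_⟩
  · dsimp only [f]
    split <;> norm_num
  · rw [Matrix.sub_mul, Matrix.one_mul, hfA]
    conv_lhs => arg 1; rw [← CFC.posPart_sub_negPart A]
    abel

lemma IsHermitian.linearMap_apply_of_nonneg {m : Type*} [Fintype m] [DecidableEq m]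
    {M : Matrix n n ℂ →ₗ[ℂ] Matrix m m ℂ} (hM : ∀ X, 0 ≤ X → 0 ≤ M X) {X : Matrix n n ℂ}
    (hX : X.IsHermitian) : (M X).IsHermitian := by
  have hX' : IsSelfAdjoint X := hX
  rw [← CFC.posPart_sub_negPart X, map_sub]
  exact (hM _ (CFC.posPart_nonneg X)).isSelfAdjoint.sub (hM _ (CFC.negPart_nonneg X)).isSelfAdjoint

lemma exists_state_smul_eq {P τ : Matrix n n ℂ} (hP : 0 ≤ P) (hτ : 0 ≤ τ) (hτ₁ : τ.trace = 1)
    {c : ℂ} (hc : P.trace ≤ c) :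
    ∃ ω : Matrix n n ℂ, 0 ≤ ω ∧ ω.trace = 1 ∧ c • ω = P + (c - P.trace) • τ := by
  have hP₀ : 0 ≤ P.trace := (nonneg_iff_posSemidef.mp hP).trace_nonneg
  rcases eq_or_ne c 0 with rfl | hc₀
  · have : P = 0 := (nonneg_iff_posSemidef.mp hP).trace_eq_zero_iff.mp (le_antisymm hc hP₀)
    exact ⟨τ, hτ, hτ₁, by simp [this]⟩
  · refine ⟨c⁻¹ • (P + (c - P.trace) • τ), ?_, ?_, smul_inv_smul₀ hc₀ _⟩
    · exact smul_nonneg (inv_nonneg_of_nonneg (hP₀.trans hc))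
        (add_nonneg hP (smul_nonneg (sub_nonneg.mpr hc) hτ))
    · rw [trace_smul, trace_add, trace_smul, hτ₁, smul_eq_mul, smul_eq_mul, mul_one,
        add_sub_cancel, inv_mul_cancel₀ hc₀]

end Matrix

section TraceNorm

variable {n : Type} [Fintype n] [DecidableEq n]

lemma ofReal_traceNorm (X : Matrix n n ℂ) : (traceNorm X : ℂ) = (CFC.abs X).trace := by
  have hXX := posSemidef_conjTranspose_mul_self X
  have hre : traceNorm X = (CFC.abs X).trace.re := by
    rw [CFC.abs, star_eq_conjTranspose, CFC.sqrt_eq_real_sqrt _ hXX.nonneg, cfcₙ_eq_cfc,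
      hXX.1.cfc_eq]
    rfl
  have him := Complex.nonneg_iff.mp (nonneg_iff_posSemidef.mp (CFC.abs_nonneg X)).trace_nonneg
  exact Complex.ext (by simp [hre]) (by simpa using him.2)

namespace Matrix.IsHermitian

variable {A : Matrix n n ℂ}

lemma trace_posPart_add_trace_negPart (hA : A.IsHermitian) :
    A⁺.trace + A⁻.trace = traceNorm A := by
  have hA' : IsSelfAdjoint A := hA
  rw [← trace_add, CFC.posPart_add_negPart A, ofReal_traceNorm]

lemma trace_posPart (hA : A.IsHermitian) : A⁺.trace = (A.trace + traceNorm A) / 2 := by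
  have hA' : IsSelfAdjoint A := hA
  have h := congrArg trace (CFC.posPart_sub_negPart A)
  rw [trace_sub] at h
  linear_combination (h + hA.trace_posPart_add_trace_negPart) / 2

lemma trace_negPart (hA : A.IsHermitian) : A⁻.trace = (traceNorm A - A.trace) / 2 := by
  have hA' : IsSelfAdjoint A := hA
  have h := congrArg trace (CFC.posPart_sub_negPart A)
  rw [trace_sub] at h
  linear_combination (hA.trace_posPart_add_trace_negPart - h) / 2

lemma re_trace_le_traceNorm (hA : A.IsHermitian) : A.trace.re ≤ traceNorm A := by
  have hA' : IsSelfAdjoint A := hA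
  have h := (Complex.le_def.mp (nonneg_iff_posSemidef.mp (CFC.negPart_nonneg A)).trace_nonneg).1
  rw [hA.trace_negPart] at h
  simp only [Complex.zero_re, Complex.div_ofNat_re, Complex.sub_re, Complex.ofReal_re] at h
  linarith

lemma exists_eq_smul_sub_smul (hA : A.IsHermitian) (hA₁ : A.trace = 1) {t : ℝ}
    (ht : traceNorm A ≤ t) :
    ∃ ω₁ ω₂ : Matrix n n ℂ, 0 ≤ ω₁ ∧ ω₁.trace = 1 ∧ 0 ≤ ω₂ ∧ ω₂.trace = 1 ∧
      A = (((1 + t) / 2 : ℝ) : ℂ) • ω₁ - (((t - 1) / 2 : ℝ) : ℂ) • ω₂ := by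
  have hA' : IsSelfAdjoint A := hA
  have h₁ : 1 ≤ traceNorm A := by simpa [hA₁] using hA.re_trace_le_traceNorm
  have hpos : A⁺.trace = ((1 + traceNorm A) / 2 : ℝ) := by
    rw [hA.trace_posPart, hA₁]; push_cast; ring
  have hneg : A⁻.trace = ((traceNorm A - 1) / 2 : ℝ) := by
    rw [hA.trace_negPart, hA₁]; push_cast; ring
  have hpos₀ : A⁺.trace ≠ 0 := by
    rw [hpos]; exact_mod_cast (by linarith : (1 + traceNorm A) / 2 ≠ 0)
  set τ := (A⁺.trace)⁻¹ • A⁺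
  have hτ : 0 ≤ τ := smul_nonneg (inv_nonneg_of_nonneg
    (nonneg_iff_posSemidef.mp (CFC.posPart_nonneg A)).trace_nonneg) (CFC.posPart_nonneg A)
  have hτ₁ : τ.trace = 1 := by rw [trace_smul, smul_eq_mul, inv_mul_cancel₀ hpos₀]
  obtain ⟨ω₁, hω₁, hω₁₁, hAω₁⟩ := exists_state_smul_eq (CFC.posPart_nonneg A) hτ hτ₁
    (c := ((1 + t) / 2 : ℝ)) (by rw [hpos]; exact_mod_cast (by linarith))
  obtain ⟨ω₂, hω₂, hω₂₁, hAω₂⟩ := exists_state_smul_eq (CFC.negPart_nonneg A) hτ hτ₁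
    (c := ((t - 1) / 2 : ℝ)) (by rw [hneg]; exact_mod_cast (by linarith))
  refine ⟨ω₁, ω₂, hω₁, hω₁₁, hω₂, hω₂₁, ?_⟩
  have hδ : (((1 + t) / 2 : ℝ) : ℂ) - A⁺.trace = (((t - 1) / 2 : ℝ) : ℂ) - A⁻.trace := by
    rw [hpos, hneg]; push_cast; ring
  rw [hAω₁, hAω₂, hδ, add_sub_add_right_eq_sub, CFC.posPart_sub_negPart A]

end Matrix.IsHermitian

lemma traceNorm_le_of_eq_sub {B P Q : Matrix n n ℂ} (hP : 0 ≤ P) (hQ : 0 ≤ Q) (h : B = P - Q) :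
    traceNorm B ≤ P.trace.re + Q.trace.re := by
  have hB : B.IsHermitian := h ▸ hP.isSelfAdjoint.sub hQ.isSelfAdjoint
  obtain ⟨E, hE₀, hE₁, hEB, hEB'⟩ := hB.exists_mul_eq_posPart
  have hpos : B⁺ = E * (P - Q) := by rw [← hEB, h]
  have hneg : B⁻ = (1 - E) * (Q - P) := by rw [← neg_sub P Q, ← h, Matrix.mul_neg, hEB', neg_neg]
  have := congrArg Complex.re hB.trace_posPart_add_trace_negPart
  rw [Complex.add_re, Complex.ofReal_re, hpos, hneg] at this
  linarith [re_trace_mul_sub_le hE₀ hE₁ hP hQ,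
    re_trace_mul_sub_le (sub_nonneg.mpr hE₁) (sub_le_self _ hE₀) hQ hP]

lemma traceNorm_map_le {m : Type} [Fintype m] [DecidableEq m]
    (M : Matrix n n ℂ →ₗ[ℂ] Matrix m m ℂ) (hM : ∀ X, 0 ≤ X → 0 ≤ M X)
    (htr : ∀ X, (M X).trace = X.trace) {A : Matrix n n ℂ} (hA : A.IsHermitian) :
    traceNorm (M A) ≤ traceNorm A := by
  have hA' : IsSelfAdjoint A := hA
  calc traceNorm (M A) ≤ (M A⁺).trace.re + (M A⁻).trace.re :=
        traceNorm_le_of_eq_sub (hM _ (CFC.posPart_nonneg A)) (hM _ (CFC.negPart_nonneg A))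
          (by rw [← map_sub, CFC.posPart_sub_negPart A])
    _ = traceNorm A := by
      rw [htr, htr, ← Complex.add_re, hA.trace_posPart_add_trace_negPart, Complex.ofReal_re]

end TraceNorm

namespace CompletelyPositive

variable {I J : Type} [Fintype I] [Fintype J] {f g : Matrix I I ℂ → Matrix J J ℂ}

lemma posSemidef (hf : CompletelyPositive f) {X : Matrix I I ℂ} (hX : X.PosSemidef) :
    (f X).PosSemidef :=
  (hf 1 _ (hX.submatrix Prod.snd)).submatrix fun j => ((0 : Fin 1), j)

lemma add (hf : CompletelyPositive f) (hg : CompletelyPositive g) :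
    CompletelyPositive fun X => f X + g X :=
  fun k M hM => (hf k M hM).add (hg k M hM)

end CompletelyPositive

section CompletelyPositive

variable {I J : Type} [Fintype I] [Fintype J]

lemma completelyPositive_sum {ι : Type*} (s : Finset ι) {f : ι → Matrix I I ℂ → Matrix J J ℂ}
    (hf : ∀ i ∈ s, CompletelyPositive (f i)) : CompletelyPositive fun X => ∑ i ∈ s, f i X := by
  intro k M hM
  have h : extMap (fun X => ∑ i ∈ s, f i X) k M = ∑ i ∈ s, extMap (f i) k M := by
    ext p q
    simp [extMap, Matrix.sum_apply]
  rw [h]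
  exact posSemidef_sum s fun i hi => hf i hi k M hM

lemma completelyPositive_mul_mul_conjTranspose (K : Matrix J I ℂ) :
    CompletelyPositive fun X : Matrix I I ℂ => K * X * Kᴴ := by
  intro k M hM
  have h : extMap (fun X => K * X * Kᴴ) k M =
      ((1 : Matrix (Fin k) (Fin k) ℂ) ⊗ₖ K) * M * ((1 : Matrix (Fin k) (Fin k) ℂ) ⊗ₖ K)ᴴ := by
    ext ⟨a, j⟩ ⟨b, j'⟩
    change (K * Matrix.of (fun i i' => M (a, i) (b, i')) * Kᴴ) j j' = _
    simp [Matrix.mul_apply, one_apply, Fintype.sum_prod_type, apply_ite (starRingEnd ℂ),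
      Finset.sum_mul]
  rw [h]
  exact hM.mul_mul_conjTranspose_same _

lemma trace_conjTranspose_mul_mul_smul_eq_sum (D : Matrix I I ℂ) (E : Matrix J J ℂ)
    (X : Matrix I I ℂ) :
    (Dᴴ * D * X).trace • (Eᴴ * E) =
      ∑ st : I × J, vecMulVec (star (E st.2)) (D st.1) * X *
        (vecMulVec (star (E st.2)) (D st.1))ᴴ := by
  ext j j'
  simp only [Matrix.smul_apply, smul_eq_mul, Matrix.sum_apply, Matrix.mul_apply, trace, diag_apply,
    vecMulVec_apply, conjTranspose_apply, Pi.star_apply, star_mul', star_star,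
    Fintype.sum_prod_type, Finset.sum_mul, Finset.mul_sum]
  conv_lhs => enter [2, t, 2, i']; rw [Finset.sum_comm]
  conv_lhs => enter [2, t]; rw [Finset.sum_comm]
  rw [Finset.sum_comm]
  exact Finset.sum_congr rfl fun _ _ => Finset.sum_congr rfl fun _ _ =>
    Finset.sum_congr rfl fun _ _ => Finset.sum_congr rfl fun _ _ => by ring

lemma completelyPositive_trace_mul_smul [DecidableEq I] [DecidableEq J] {P : Matrix I I ℂ}
    {ω : Matrix J J ℂ} (hP : 0 ≤ P) (hω : 0 ≤ ω) :
    CompletelyPositive fun X => (P * X).trace • ω := by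
  obtain ⟨D, rfl⟩ := CStarAlgebra.nonneg_iff_eq_star_mul_self.mp hP
  obtain ⟨E, rfl⟩ := CStarAlgebra.nonneg_iff_eq_star_mul_self.mp hω
  simp only [star_eq_conjTranspose, trace_conjTranspose_mul_mul_smul_eq_sum]
  exact completelyPositive_sum _ fun st _ => completelyPositive_mul_mul_conjTranspose _

end CompletelyPositive

section MeasurePrepare

variable {n m : Type} [Fintype n] [DecidableEq n]

def measurePrepare (E : Matrix n n ℂ) (ω₁ ω₂ : Matrix m m ℂ) :
    Matrix n n ℂ →ₗ[ℂ] Matrix m m ℂ where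
  toFun X := (E * X).trace • ω₁ + ((1 - E) * X).trace • ω₂
  map_add' X Y := by
    simp only [Matrix.mul_add, trace_add, add_smul]
    abel
  map_smul' c X := by
    simp only [Matrix.mul_smul, trace_smul, smul_eq_mul, mul_smul, smul_add, RingHom.id_apply]

lemma measurePrepare_apply (E : Matrix n n ℂ) (ω₁ ω₂ : Matrix m m ℂ) (X : Matrix n n ℂ) :
    measurePrepare E ω₁ ω₂ X = (E * X).trace • ω₁ + ((1 - E) * X).trace • ω₂ :=
  rfl

variable [Fintype m] {E : Matrix n n ℂ} {ω₁ ω₂ : Matrix m m ℂ}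

lemma trace_measurePrepare (hω₁ : ω₁.trace = 1) (hω₂ : ω₂.trace = 1) (X : Matrix n n ℂ) :
    (measurePrepare E ω₁ ω₂ X).trace = X.trace := by
  rw [measurePrepare_apply, trace_add, trace_smul, trace_smul, hω₁, hω₂, smul_eq_mul, smul_eq_mul,
    mul_one, mul_one, ← trace_add, ← Matrix.add_mul, add_sub_cancel, Matrix.one_mul]

variable [DecidableEq m]

lemma completelyPositive_measurePrepare (hE₀ : 0 ≤ E) (hE₁ : E ≤ 1) (hω₁ : 0 ≤ ω₁)
    (hω₂ : 0 ≤ ω₂) : CompletelyPositive (measurePrepare E ω₁ ω₂) :=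
  (completelyPositive_trace_mul_smul hE₀ hω₁).add
    (completelyPositive_trace_mul_smul (sub_nonneg.mpr hE₁) hω₂)

theorem exists_completelyPositive_map_eq {A : Matrix n n ℂ} {B : Matrix m m ℂ}
    (hA : A.IsHermitian) (hB : B.IsHermitian) (hA₁ : A.trace = 1) (hB₁ : B.trace = 1)
    (h : traceNorm B ≤ traceNorm A) :
    ∃ M : Matrix n n ℂ →ₗ[ℂ] Matrix m m ℂ,
      CompletelyPositive M ∧ (∀ X, (M X).trace = X.trace) ∧ M A = B := by
  obtain ⟨E, hE₀, hE₁, hEA, hEA'⟩ := hA.exists_mul_eq_posPart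
  obtain ⟨ω₁, ω₂, hω₁, hω₁₁, hω₂, hω₂₁, rfl⟩ := hB.exists_eq_smul_sub_smul hB₁ h
  refine ⟨measurePrepare E ω₁ ω₂, completelyPositive_measurePrepare hE₀ hE₁ hω₁ hω₂,
    trace_measurePrepare hω₁₁ hω₂₁, ?_⟩
  rw [measurePrepare_apply, hEA, hEA', trace_neg, hA.trace_posPart, hA.trace_negPart, hA₁]
  push_cast
  rw [neg_smul, ← sub_eq_add_neg]

end MeasurePrepare

section PartialTranspose

variable {IA IB JA JB : Type}

lemma ptB_ptB (X : BMat IA IB) : ptB (ptB X) = X :=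
  rfl

lemma Matrix.IsHermitian.ptB {X : BMat IA IB} (hX : X.IsHermitian) : (ptB X).IsHermitian := by
  ext p q
  exact congrFun (congrFun hX (p.1, q.2)) (q.1, p.2)

def ptBLinearMap : BMat IA IB →ₗ[ℂ] BMat IA IB where
  toFun := ptB
  map_add' _ _ := rfl
  map_smul' _ _ := rfl

@[simp]
lemma ptBLinearMap_apply (X : BMat IA IB) : ptBLinearMap X = ptB X :=
  rfl

variable [Fintype IA] [Fintype IB] [Fintype JA] [Fintype JB]

lemma trace_ptB (X : BMat IA IB) : (ptB X).trace = X.trace :=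
  rfl

variable [DecidableEq IA] [DecidableEq IB] [DecidableEq JA] [DecidableEq JB]

lemma CompletelyPositive.isPPTq_ptB_conj {M : BMat IA IB →ₗ[ℂ] BMat JA JB}
    (hM : CompletelyPositive M) (htr : ∀ X, (M X).trace = X.trace) :
    IsPPTq (ptBLinearMap ∘ₗ M ∘ₗ ptBLinearMap) :=
  ⟨fun _ hX => (hX.ptB.linearMap_apply_of_nonneg
      (fun _ hY => (hM.posSemidef (nonneg_iff_posSemidef.mp hY)).nonneg)).ptB,
    fun X => htr (ptB X), hM⟩

lemma IsPPTq.traceNorm_ptB_le {N : BMat IA IB →ₗ[ℂ] BMat JA JB} (hN : IsPPTq N)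
    {X : BMat IA IB} (hX : X.IsHermitian) : traceNorm (ptB (N X)) ≤ traceNorm (ptB X) := by
  simpa [ptB_ptB] using traceNorm_map_le (ptBLinearMap ∘ₗ N ∘ₗ ptBLinearMap)
    (fun _ hY => (hN.2.2.posSemidef (nonneg_iff_posSemidef.mp hY)).nonneg)
    (fun Y => hN.2.1 (ptB Y)) hX.ptB

lemma IsQuasiState.one_le_traceNorm_ptB {ρ : BMat IA IB} (hρ : IsQuasiState ρ) :
    1 ≤ traceNorm (ptB ρ) := by
  simpa [trace_ptB, hρ.2] using hρ.1.ptB.re_trace_le_traceNorm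

end PartialTranspose

/-- For bipartite quasi-states `ρ`, `σ`, there exists a PPTq
operation `N` with `N ρ = σ` iff `E_N(ρ) ≥ E_N(σ)`. -/
theorem quasiState_transform_iff_EN {dA dB dA' dB' : ℕ}
    (ρ : BMat (Fin dA) (Fin dB)) (σ : BMat (Fin dA') (Fin dB'))
    (hρ : IsQuasiState ρ) (hσ : IsQuasiState σ) :
    (∃ N : BMat (Fin dA) (Fin dB) →ₗ[ℂ] BMat (Fin dA') (Fin dB'),
        IsPPTq N ∧ N ρ = σ) ↔ EN σ ≤ EN ρ := by
  rw [EN, EN, Real.logb_le_logb one_lt_two (zero_lt_one.trans_le hσ.one_le_traceNorm_ptB)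
    (zero_lt_one.trans_le hρ.one_le_traceNorm_ptB)]
  constructor
  · rintro ⟨N, hN, rfl⟩
    exact hN.traceNorm_ptB_le hρ.1
  · intro h
    obtain ⟨M, hM, htr, hMρ⟩ := exists_completelyPositive_map_eq hρ.1.ptB hσ.1.ptB hρ.2 hσ.2 h
    exact ⟨_, hM.isPPTq_ptB_conj htr, congrArg ptB hMρ⟩

end
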